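/- arXiv:2409.10415 — 8 statements merged into one kernel-verified Lean document; each statement's English description precedes it below -/
import Mathlib

section
/- Let w be distributed according to the Mallows measure M_N^q with q ∈ [0,1), and let H_{L,K}(w) = #{i : 1 ≤ i ≤ L, 1 ≤ w(i) ≤ K} for 1 ≤ L,K ≤ N. Then for any s with max{L+K-N, 0} ≤ s ≤ min{L,K}, the probability that H_{L,K}(w) = s equals q^{(K-s)(L-s)} · (q;q)_K (q;q)_L (q;q)_{N-K} (q;q)_{N-L} / ((q;q)_s (q;q)_{K-s} (q;q)_{L-s} (q;q)_{N+s-K-L} (q;q)_N). -/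
open Finset

/-- The number of inversions of a permutation of `Fin N`. -/
def permInv {N : ℕ} (w : Equiv.Perm (Fin N)) : ℕ :=
  (Finset.univ.filter (fun p : Fin N × Fin N => p.1 < p.2 ∧ w p.2 < w p.1)).card

/-- The q-Pochhammer symbol `(q;q)_n = ∏_{k=1}^n (1-q^k)`. -/
noncomputable def qPoch (q : ℝ) (n : ℕ) : ℝ := ∏ k ∈ Finset.range n, (1 - q ^ (k + 1))

/-- The height function `H_{L,K}(w) = #{i : 1 ≤ i ≤ L, 1 ≤ w(i) ≤ K}` (0-indexed). -/
def heightFn {N : ℕ} (L K : ℕ) (w : Equiv.Perm (Fin N)) : ℕ :=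
  (Finset.univ.filter (fun i : Fin N => (i : ℕ) < L ∧ ((w i : ℕ)) < K)).card

/-!
A permutation `w` of `Fin (n + 1)` is determined by `v = w 0` and the order-preserving
relabelling `e` of its remaining values, and `inv w = v + inv e`. Peeling off the first row
therefore gives, for `G(N, L, K, s) = ∑_{H_{L,K}(w) = s} q ^ inv w`, the recursion
`G(n+1, l+1, K, s) = [K]_q G(n, l, K-1, s-1) + q^K [n+1-K]_q G(n, l, K, s)`.
Writing `s = a`, `K = a + b`, `L = a + c`, `N = a + b + c + d`, induction on `L` shows
`G · [a]_q! [b]_q! [c]_q! [d]_q! = q^(bc) [a+b]_q! [a+c]_q! [c+d]_q! [b+d]_q!`; the inductive step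
comes down to `[a+c+2]_q = [a+1]_q + q^(a+1) [c+1]_q`. Dividing by the partition function
`G(N, 0, K, 0) = [N]_q! = (q;q)_N / (1-q)^N` gives the Mallows probability.
In the code `G = heightGF q`, `[n]_q = qNat q n` and `[n]_q! = qFact q n`.
-/

section QAnalogue

variable {R : Type*} [CommRing R] (q : R)

def qNat (n : ℕ) : R := ∑ i ∈ range n, q ^ i

def qFact (n : ℕ) : R := ∏ k ∈ range n, qNat q (k + 1)

lemma qNat_add (m n : ℕ) : qNat q (m + n) = qNat q m + q ^ m * qNat q n := by
  simp only [qNat, sum_range_add, pow_add, mul_sum]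

@[simp] lemma qFact_zero : qFact q 0 = 1 := prod_range_zero _

lemma qFact_succ (n : ℕ) : qFact q (n + 1) = qFact q n * qNat q (n + 1) :=
  prod_range_succ _ _

lemma sum_fin_pow_mul_ite {m K : ℕ} (hK : K ≤ m) (A B : R) :
    ∑ v : Fin m, q ^ (v : ℕ) * (if (v : ℕ) < K then A else B) =
      qNat q K * A + q ^ K * qNat q (m - K) * B := by
  obtain ⟨r, rfl⟩ := Nat.exists_eq_add_of_le hK
  rw [Fin.sum_univ_eq_sum_range (fun v => q ^ v * if v < K then A else B), sum_range_add,
    Nat.add_sub_cancel_left]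
  simp only [qNat, sum_mul, mul_sum]
  congr 1
  · exact sum_congr rfl fun x hx => by rw [if_pos (mem_range.1 hx)]
  · exact sum_congr rfl fun x _ => by rw [if_neg (by omega), pow_add, mul_assoc]

end QAnalogue

lemma qFact_pos {q : ℝ} (hq : 0 ≤ q) (n : ℕ) : 0 < qFact q n :=
  prod_pos fun k _ => by rw [qNat, sum_range_succ']; positivity

lemma qPoch_eq_qFact_mul (q : ℝ) (n : ℕ) : qPoch q n = qFact q n * (1 - q) ^ n := by
  simp only [qPoch, qFact, qNat, ← geom_sum_mul_neg, prod_mul_distrib, prod_const, card_range]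

section ConsPerm

open Equiv

variable {n : ℕ}

def consPerm (v : Fin (n + 1)) (e : Perm (Fin n)) : Perm (Fin (n + 1)) :=
  ((finSuccEquiv n).symm.permCongr e.optionCongr).trans (Fin.cycleRange v).symm

@[simp] lemma consPerm_zero (v : Fin (n + 1)) (e : Perm (Fin n)) : consPerm v e 0 = v := by
  simp [consPerm]

@[simp] lemma consPerm_succ (v : Fin (n + 1)) (e : Perm (Fin n)) (i : Fin n) :
    consPerm v e i.succ = v.succAbove (e i) := by
  simp [consPerm]

lemma consPerm_bijective :
    Function.Bijective (fun p : Fin (n + 1) × Perm (Fin n) => consPerm p.1 p.2) := by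
  refine (Fintype.bijective_iff_injective_and_card _).2 ⟨?_, ?_⟩
  · rintro ⟨v, e⟩ ⟨v', e'⟩ h
    obtain rfl : v = v' := by simpa using congrArg (· 0) h
    have : e = e' := ext fun i => by simpa using congrArg (· i.succ) h
    rw [this]
  · simp [Fintype.card_perm, Nat.factorial_succ]

lemma sum_perm_fin_succ {M : Type*} [AddCommMonoid M] (f : Perm (Fin (n + 1)) → M) :
    ∑ w, f w = ∑ v, ∑ e, f (consPerm v e) := by
  rw [← Fintype.sum_prod_type']
  exact (Fintype.sum_bijective _ consPerm_bijective _ _ fun _ => rfl).symm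

lemma card_filter_perm_lt (e : Perm (Fin n)) (m : ℕ) (hm : m ≤ n) :
    #{j | (e j : ℕ) < m} = m := by
  rw [card_equiv e (t := {j : Fin n | (j : ℕ) < m}) (by simp), Fin.card_filter_val_lt,
    min_eq_right hm]

lemma permInv_eq_sum {N : ℕ} (w : Perm (Fin N)) :
    permInv w = ∑ i, #{j | i < j ∧ w j < w i} := by
  simp only [permInv, card_filter, Fintype.sum_prod_type]

lemma permInv_consPerm (v : Fin (n + 1)) (e : Perm (Fin n)) :
    permInv (consPerm v e) = v + permInv e := by
  rw [permInv_eq_sum, permInv_eq_sum, Fin.sum_univ_succ]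
  congr 1
  · rw [Fin.card_filter_univ_succ']
    simp only [consPerm_zero, consPerm_succ, lt_self_iff_false, false_and, if_false, zero_add,
      Fin.succ_pos, true_and, Fin.succAbove_lt_iff_castSucc_lt]
    exact card_filter_perm_lt e v (Fin.is_le v)
  · refine sum_congr rfl fun i _ => ?_
    rw [Fin.card_filter_univ_succ']
    simp [Fin.succAbove_lt_succAbove_iff]

lemma Fin.val_succAbove_lt_iff (v : Fin (n + 1)) (x : Fin n) (K : ℕ) :
    (v.succAbove x : ℕ) < K ↔ (x : ℕ) < if (v : ℕ) < K then K - 1 else K := by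
  rcases lt_or_ge x.castSucc v with h | h
  · rw [Fin.succAbove_of_castSucc_lt _ _ h, Fin.val_castSucc]
    rw [Fin.lt_def, Fin.val_castSucc] at h
    split_ifs <;> omega
  · rw [Fin.succAbove_of_le_castSucc _ _ h, Fin.val_succ]
    rw [Fin.le_def, Fin.val_castSucc] at h
    split_ifs <;> omega

lemma heightFn_consPerm (l K : ℕ) (v : Fin (n + 1)) (e : Perm (Fin n)) :
    heightFn (l + 1) K (consPerm v e) =
      if (v : ℕ) < K then heightFn l (K - 1) e + 1 else heightFn l K e := by
  simp only [heightFn, Fin.card_filter_univ_succ, consPerm_zero, consPerm_succ, Fin.val_zero,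
    Fin.val_succ, Nat.zero_lt_succ, true_and, Nat.add_lt_add_iff_right, Fin.val_succAbove_lt_iff]
  split_ifs <;> rfl

end ConsPerm

lemma heightFn_zero_left {N : ℕ} (K : ℕ) (w : Equiv.Perm (Fin N)) : heightFn 0 K w = 0 := by
  simp [heightFn]

lemma heightFn_le_left {N : ℕ} (L K : ℕ) (w : Equiv.Perm (Fin N)) : heightFn L K w ≤ L :=
  calc heightFn L K w ≤ #{i : Fin N | (i : ℕ) < L} :=
        card_le_card (monotone_filter_right _ fun _ _ h => h.1)
    _ ≤ L := Fin.card_filter_val_lt.trans_le (min_le_right _ _)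

section GeneratingFunction

variable {R : Type*} [CommRing R] (q : R)

def heightGF (N L K s : ℕ) : R :=
  ∑ w ∈ univ.filter (fun w : Equiv.Perm (Fin N) => heightFn L K w = s), q ^ permInv w

lemma sum_pow_permInv (n : ℕ) : ∑ w : Equiv.Perm (Fin n), q ^ permInv w = qFact q n := by
  induction n with
  | zero => simp [permInv]
  | succ n ih =>
    rw [sum_perm_fin_succ, qFact_succ, mul_comm, ← ih, qNat,
      ← Fin.sum_univ_eq_sum_range (q ^ ·), sum_mul_sum]
    simp only [permInv_consPerm, pow_add]

lemma heightGF_zero_left (N K : ℕ) : heightGF q N 0 K 0 = qFact q N := by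
  simp [heightGF, heightFn_zero_left, sum_pow_permInv]

lemma heightGF_eq_zero_of_lt {N L K s : ℕ} (h : L < s) : heightGF q N L K s = 0 :=
  sum_eq_zero fun w hw => by
    have := heightFn_le_left L K w
    rw [(mem_filter.1 hw).2] at this
    omega

lemma heightGF_succ {n l K : ℕ} (s : ℕ) (hK : K ≤ n + 1) :
    heightGF q (n + 1) (l + 1) K s =
      qNat q K * ∑ e ∈ univ.filter (fun e : Equiv.Perm (Fin n) => heightFn l (K - 1) e + 1 = s),
        q ^ permInv e + q ^ K * qNat q (n + 1 - K) * heightGF q n l K s := by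
  rw [heightGF, sum_filter, sum_perm_fin_succ, ← sum_fin_pow_mul_ite q hK]
  refine sum_congr rfl fun v _ => ?_
  split_ifs with hv <;>
    simp only [heightGF, heightFn_consPerm, hv, if_true, if_false, permInv_consPerm, pow_add,
      mul_sum, sum_filter, mul_ite, mul_zero]

lemma heightGF_succ_succ {n l K : ℕ} (s : ℕ) (hK : K ≤ n) :
    heightGF q (n + 1) (l + 1) (K + 1) (s + 1) =
      qNat q (K + 1) * heightGF q n l K s +
        q ^ (K + 1) * qNat q (n - K) * heightGF q n l (K + 1) (s + 1) := by
  rw [heightGF_succ q _ (by omega)]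
  simp only [Nat.add_sub_cancel, Nat.add_sub_add_right, Nat.add_right_cancel_iff]
  rfl

lemma heightGF_succ_zero {n l K : ℕ} (hK : K ≤ n + 1) :
    heightGF q (n + 1) (l + 1) K 0 = q ^ K * qNat q (n + 1 - K) * heightGF q n l K 0 := by
  simp [heightGF_succ q _ hK]

theorem heightGF_mul_qFact {N L K : ℕ} (a b c d : ℕ) (hN : N = a + b + c + d) (hL : L = a + c)
    (hK : K = a + b) :
    heightGF q N L K a * (qFact q a * qFact q b * qFact q c * qFact q d) =
      q ^ (b * c) * (qFact q (a + b) * qFact q (a + c) * qFact q (c + d) * qFact q (b + d)) := by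
  induction L generalizing N K a c with
  | zero =>
    obtain ⟨rfl, rfl⟩ : a = 0 ∧ c = 0 := by omega
    subst hN hK
    simp only [heightGF_zero_left, qFact_zero, add_zero, zero_add, mul_zero, pow_zero]
    ring
  | succ l ih =>
    obtain ⟨n, rfl⟩ : ∃ n, N = n + 1 := ⟨N - 1, by omega⟩
    rcases a with _ | a <;> rcases c with _ | c
    · omega
    · have h := ih (N := n) (K := K) 0 c (by omega) (by omega) hK
      rw [heightGF_succ_zero q (by omega), show n + 1 - K = c + d + 1 by omega]
      subst hK
      simp only [zero_add, qFact_zero, one_mul] at h ⊢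
      rw [qFact_succ q c, show c + 1 + d = c + d + 1 by ring, qFact_succ q (c + d)]
      linear_combination (q ^ b * qNat q (c + d + 1) * qNat q (c + 1)) * h
    · obtain ⟨K, rfl⟩ : ∃ K', K = K' + 1 := ⟨K - 1, by omega⟩
      have h := ih (N := n) (K := K) a 0 (by omega) (by omega) (by omega)
      rw [heightGF_succ_succ q _ (by omega), heightGF_eq_zero_of_lt q (by omega : l < a + 1)]
      obtain rfl : K = a + b := by omega
      simp only [add_zero, zero_add, mul_zero, pow_zero, qFact_zero, mul_one, one_mul] at h ⊢
      rw [show a + 1 + b = a + b + 1 by ring, qFact_succ q a, qFact_succ q (a + b)]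
      linear_combination (qNat q (a + b + 1) * qNat q (a + 1)) * h
    · obtain ⟨K, rfl⟩ : ∃ K', K = K' + 1 := ⟨K - 1, by omega⟩
      have h₁ := ih (N := n) (K := K) a (c + 1) (by omega) (by omega) (by omega)
      have h₂ := ih (N := n) (K := K + 1) (a + 1) c (by omega) (by omega) (by omega)
      rw [heightGF_succ_succ q _ (by omega), show n - K = c + d + 1 by omega]
      obtain rfl : K = a + b := by omega
      rw [show a + (c + 1) = a + c + 1 by ring, show c + 1 + d = c + d + 1 by ring] at h₁
      rw [show a + 1 + b = a + b + 1 by ring, show a + 1 + c = a + c + 1 by ring] at h₂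
      rw [show a + 1 + b = a + b + 1 by ring, show a + 1 + (c + 1) = a + c + 1 + 1 by ring,
        show c + 1 + d = c + d + 1 by ring]
      simp only [qFact_succ] at h₁ h₂ ⊢
      have hsplit := qNat_add q (a + 1) (c + 1)
      rw [show a + 1 + (c + 1) = a + c + 1 + 1 by ring] at hsplit
      linear_combination (qNat q (a + b + 1) * qNat q (a + 1)) * h₁ +
        (q ^ (a + b + 1) * qNat q (c + d + 1) * qNat q (c + 1)) * h₂ -
        (q ^ (b * (c + 1)) * qFact q (a + b) * qNat q (a + b + 1) * qFact q (a + c) *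
          qNat q (a + c + 1) * qFact q (c + d) * qNat q (c + d + 1) * qFact q (b + d)) * hsplit

end GeneratingFunction

theorem mallows_height_distribution_general (N L K s : ℕ) (q : ℝ) (hq0 : 0 ≤ q) (hq1 : q < 1)
    (hsK : s ≤ K) (hsL : s ≤ L) (hs : L + K ≤ N + s) :
    (∑ w ∈ Finset.univ.filter (fun w : Equiv.Perm (Fin N) => heightFn L K w = s),
        q ^ permInv w * ∏ j ∈ Finset.range N, (1 - q) / (1 - q ^ (j + 1)))
      = q ^ ((K - s) * (L - s)) *
        (qPoch q K * qPoch q L * qPoch q (N - K) * qPoch q (N - L)) /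
        (qPoch q s * qPoch q (K - s) * qPoch q (L - s) * qPoch q (N + s - K - L) *
          qPoch q N) := by
  obtain ⟨b, rfl⟩ : ∃ b, K = s + b := ⟨K - s, by omega⟩
  obtain ⟨c, rfl⟩ : ∃ c, L = s + c := ⟨L - s, by omega⟩
  obtain ⟨d, rfl⟩ : ∃ d, N = s + b + c + d := ⟨N - s - b - c, by omega⟩
  have key := heightGF_mul_qFact q s b c d rfl rfl rfl
  rw [← sum_mul, prod_div_distrib, prod_const, card_range, ← qPoch.eq_1]
  change heightGF q _ _ _ _ * _ = _
  rw [show s + b - s = b by omega, show s + c - s = c by omega,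
    show s + b + c + d - (s + b) = c + d by omega, show s + b + c + d - (s + c) = b + d by omega,
    show s + b + c + d + s - (s + b) - (s + c) = d by omega]
  simp only [qPoch_eq_qFact_mul]
  have hq : 1 - q ≠ 0 := by linarith
  have hF (n : ℕ) : qFact q n ≠ 0 := (qFact_pos hq0 n).ne'
  field_simp [hF]
  linear_combination (1 - q) ^ (2 * (s + b + c + d)) * key

/-- Exact distribution of the height function of the Mallows measure:
`Prob(H_{L,K} = s) = q^{(K-s)(L-s)} (q;q)_K (q;q)_L (q;q)_{N-K} (q;q)_{N-L} /
((q;q)_s (q;q)_{K-s} (q;q)_{L-s} (q;q)_{N+s-K-L} (q;q)_N)`. -/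
theorem mallows_height_distribution (N L K s : ℕ) (q : ℝ) (hq0 : 0 ≤ q) (hq1 : q < 1)
    (hL1 : 1 ≤ L) (hLN : L ≤ N) (hK1 : 1 ≤ K) (hKN : K ≤ N)
    (hsK : s ≤ K) (hsL : s ≤ L) (hs : L + K ≤ N + s) :
    (∑ w ∈ Finset.univ.filter (fun w : Equiv.Perm (Fin N) => heightFn L K w = s),
        q ^ permInv w * ∏ j ∈ Finset.range N, (1 - q) / (1 - q ^ (j + 1)))
      = q ^ ((K - s) * (L - s)) *
        (qPoch q K * qPoch q L * qPoch q (N - K) * qPoch q (N - L)) /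
        (qPoch q s * qPoch q (K - s) * qPoch q (L - s) * qPoch q (N + s - K - L) *
          qPoch q N) :=
  mallows_height_distribution_general N L K s q hq0 hq1 hsK hsL hs
end

section
/- Fix β > 0 and x,y ∈ (0,1), and set δ = h_β(x,y) := (1/β)[ln(1-e^{-β}) - ln(e^{-βx}+e^{-βy}-e^{-β(x+y)}-e^{-β})]. Then δ ∈ (max{x+y-1,0}, min{x,y}), i.e., h_β(x,y) is strictly between max{x+y-1,0} and min{x,y}. -/
/-- The limiting height profile `h_β(x,y)` of the Mallows measure. -/
noncomputable def hFn (β x y : ℝ) : ℝ :=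
  (1 / β) * (Real.log (1 - Real.exp (-β)) -
    Real.log (Real.exp (-β * x) + Real.exp (-β * y) - Real.exp (-β * (x + y)) - Real.exp (-β)))

set_option maxHeartbeats 800000 in
/-- `h_β(x,y)` lies strictly between `max{x+y-1,0}` and `min{x,y}`. -/
theorem hFn_mem_Ioo (β x y : ℝ) (hβ : 0 < β)
    (hx : x ∈ Set.Ioo (0:ℝ) 1) (hy : y ∈ Set.Ioo (0:ℝ) 1) :
    hFn β x y ∈ Set.Ioo (max (x + y - 1) 0) (min x y) := by
  obtain ⟨hx0, hx1⟩ := hx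
  obtain ⟨hy0, hy1⟩ := hy
  set u := Real.exp (-β * x) with hu_def
  set v := Real.exp (-β * y) with hv_def
  set q := Real.exp (-β) with hq_def
  have hq0 : 0 < q := Real.exp_pos _
  have hu0 : 0 < u := Real.exp_pos _
  have hv0 : 0 < v := Real.exp_pos _
  have hu1 : u < 1 := by
    rw [hu_def, Real.exp_lt_one_iff]; nlinarith
  have hv1 : v < 1 := by
    rw [hv_def, Real.exp_lt_one_iff]; nlinarith
  have hqu : q < u := by
    rw [hq_def, hu_def]; exact Real.exp_lt_exp.mpr (by nlinarith)
  have hqv : q < v := by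
    rw [hq_def, hv_def]; exact Real.exp_lt_exp.mpr (by nlinarith)
  have huv : Real.exp (-β * (x + y)) = u * v := by
    rw [hu_def, hv_def, ← Real.exp_add]; ring_nf
  set A := 1 - q with hA_def
  set B := u + v - u * v - q with hB_def
  have hA0 : 0 < A := by nlinarith
  have hB0 : 0 < B := by nlinarith [(u - q) * (1 - v), mul_pos (sub_pos.mpr hqu) (sub_pos.mpr hv1), mul_pos hv0 (sub_pos.mpr (show q < 1 by nlinarith))]
  have hBA : B < A := by nlinarith [mul_pos (sub_pos.mpr hu1) (sub_pos.mpr hv1)]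
  have hFn_eq : hFn β x y = (1 / β) * (Real.log A - Real.log B) := by
    rw [hFn]; rw [huv]
  rw [hFn_eq]
  constructor
  · -- lower bound
    rw [max_lt_iff]
    have hlogBA : Real.log B < Real.log A := Real.log_lt_log hB0 hBA
    constructor
    · -- x + y - 1 < δ
      -- B < A * exp(β*(1-(x+y)))
      set w := Real.exp (β * (1 - (x + y))) with hw_def
      have hw0 : 0 < w := Real.exp_pos _
      have hqw : q * w = u * v := by
        rw [hq_def, hw_def, ← Real.exp_add, ← huv]; ring_nf
      have hBAw : B < A * w := by
        have h1 : q * B < q * (A * w) := by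
          have : q * (A * w) = (1 - q) * (u * v) := by rw [mul_comm A w, ← mul_assoc, hqw]; ring
          rw [this]
          nlinarith [mul_pos (sub_pos.mpr hqu) (sub_pos.mpr hqv)]
        exact lt_of_mul_lt_mul_left h1 hq0.le
      have hlog : Real.log B < Real.log A + β * (1 - (x + y)) := by
        have := Real.log_lt_log hB0 hBAw
        rwa [Real.log_mul hA0.ne' hw0.ne', hw_def, Real.log_exp] at this
      rw [show (1:ℝ) / β * (Real.log A - Real.log B) = (Real.log A - Real.log B) / β by ring,
        lt_div_iff₀ hβ]
      linarith [hlog]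
    · -- 0 < δ
      have := sub_pos.mpr hlogBA
      positivity
  · -- upper bound
    rw [lt_min_iff]
    have key : ∀ a b : ℝ, 0 < a → a < 1 → q < b → b < 1 →
        a * (1 - q) < a + b - a * b - q := by
      intro a b ha0 ha1 hqb hb1
      nlinarith [mul_pos (sub_pos.mpr ha1) (sub_pos.mpr hqb)]
    have main : ∀ z a b : ℝ, a = Real.exp (-β * z) → B = a + b - a * b - q →
        0 < a → a < 1 → q < b → b < 1 → (1 / β) * (Real.log A - Real.log B) < z := by
      intro z a b haz hBab ha0 ha1 hqb hb1
      have h1 : a * A < B := by rw [hBab, hA_def]; exact key a b ha0 ha1 hqb hb1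
      have h2 : Real.exp (β * z) * a = 1 := by
        rw [haz, ← Real.exp_add, show β * z + -β * z = 0 by ring, Real.exp_zero]
      have h3 : A < Real.exp (β * z) * B := by
        have he : Real.exp (β * z) * (a * A) = A := by rw [← mul_assoc, h2, one_mul]
        calc A = Real.exp (β * z) * (a * A) := he.symm
          _ < Real.exp (β * z) * B := mul_lt_mul_of_pos_left h1 (Real.exp_pos _)
      have h4 : Real.log A < β * z + Real.log B := by
        have := Real.log_lt_log hA0 h3
        rwa [Real.log_mul (Real.exp_pos _).ne' hB0.ne', Real.log_exp] at this
      rw [show (1:ℝ) / β * (Real.log A - Real.log B) = (Real.log A - Real.log B) / β by ring,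
        div_lt_iff₀ hβ]
      linarith [h4]
    constructor
    · exact main x u v hu_def rfl hu0 hu1 hqv hv1
    · exact main y v u hv_def (by rw [hB_def]; ring) hv0 hv1 hqu hu1
end

section
/- With a_β(x,y;δ) as the large-deviation rate function of the Mallows measure, its second derivative in δ equals β·(2 + e^{-βδ}/(1-e^{-βδ}) + e^{-β(x-δ)}/(1-e^{-β(x-δ)}) + e^{-β(y-δ)}/(1-e^{-β(y-δ)}) + e^{-β(1-x-y+δ)}/(1-e^{-β(1-x-y+δ)})), which is strictly positive; hence a_β(x,y;·) is strictly convex on (max{x+y-1,0}, min{x,y}). -/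
/-- The real dilogarithm `Li₂(x) = ∑_{n ≥ 1} xⁿ/n²`. -/
noncomputable def Li2 (x : ℝ) : ℝ := ∑' n : ℕ, x ^ (n + 1) / ((n : ℝ) + 1) ^ 2

/-- The large-deviation rate function `a_β(x,y;δ)` of the Mallows height function. -/
noncomputable def rateFn (β x y δ : ℝ) : ℝ :=
  (1 / β) * (β ^ 2 * (x - δ) * (y - δ) - Real.pi ^ 2 / 6
    + Li2 (Real.exp (-β * δ)) + Li2 (Real.exp (-β * (x - δ)))
    + Li2 (Real.exp (-β * (y - δ))) + Li2 (Real.exp (-β * (1 - x - y + δ)))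
    + Li2 (Real.exp (-β)) - Li2 (Real.exp (-β * x)) - Li2 (Real.exp (-β * y))
    - Li2 (Real.exp (-β * (1 - x))) - Li2 (Real.exp (-β * (1 - y))))

/-!
Termwise differentiation of the dilogarithm series gives `Li₂'(z) = -log(1 - z)/z` on `(0, 1)`,
hence `d/ds Li₂(e^{-βs}) = β log(1 - e^{-βs})` and `d²/ds² Li₂(e^{-βs}) = β² e^{-βs}/(1 - e^{-βs})`
for `s > 0`. On the interval the four arguments `δ, x - δ, y - δ, 1 - x - y + δ` of the dilogarithms
in `a_β` are positive, so each of the four quotients in `∂²_δ a_β` is positive, and a positive second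
derivative makes `a_β(x, y; ·)` strictly convex.
-/

open Real Set Filter Topology

lemma hasDerivAt_Li2 {z : ℝ} (hz : |z| < 1) :
    HasDerivAt Li2 (∑' n : ℕ, z ^ n / ((n : ℝ) + 1)) z := by
  obtain ⟨r, hzr, hr1⟩ := exists_between hz
  have hr0 : 0 < r := (abs_nonneg z).trans_lt hzr
  refine hasDerivAt_tsum_of_isPreconnected (summable_geometric_of_lt_one hr0.le hr1)
    Metric.isOpen_ball (convex_ball (0 : ℝ) r).isPreconnected
    (g := fun (n : ℕ) w => w ^ (n + 1) / ((n : ℝ) + 1) ^ 2)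
    (g' := fun (n : ℕ) w => w ^ n / ((n : ℝ) + 1)) (y₀ := 0)
    (fun n w _ => ?_) (fun n w hw => ?_) (Metric.mem_ball_self hr0) ?_ (by simpa using hzr)
  · refine ((hasDerivAt_pow (n + 1) w).div_const (((n : ℝ) + 1) ^ 2)).congr_deriv ?_
    rw [Nat.add_sub_cancel]
    push_cast
    field_simp
  · have hw : |w| < r := by simpa using hw
    rw [norm_div, norm_pow, Real.norm_eq_abs, Real.norm_of_nonneg (by positivity)]
    calc |w| ^ n / ((n : ℝ) + 1) ≤ |w| ^ n := div_le_self (by positivity) (by simp)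
      _ ≤ r ^ n := pow_le_pow_left₀ (abs_nonneg w) hw.le n
  · simp

lemma tsum_pow_div_succ {z : ℝ} (hz : |z| < 1) (hz0 : z ≠ 0) :
    ∑' n : ℕ, z ^ n / ((n : ℝ) + 1) = -log (1 - z) / z := by
  rw [← ((hasSum_pow_div_log_of_abs_lt_one hz).div_const z).tsum_eq]
  exact tsum_congr fun n => by rw [pow_succ, mul_div_right_comm, mul_div_cancel_right₀ _ hz0]

lemma hasDerivAt_Li2_exp_neg_mul {β s : ℝ} (h : 0 < β * s) :
    HasDerivAt (fun s => Li2 (exp (-β * s))) (β * log (1 - exp (-β * s))) s := by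
  have hz0 : 0 < exp (-β * s) := exp_pos _
  have hz : |exp (-β * s)| < 1 := by
    rw [abs_of_pos hz0]
    exact exp_lt_one_iff.mpr (by linarith)
  have hLi2 := hasDerivAt_Li2 hz
  rw [tsum_pow_div_succ hz hz0.ne'] at hLi2
  refine (hLi2.comp s ((hasDerivAt_id' s).const_mul (-β)).exp).congr_deriv ?_
  field_simp

lemma hasDerivAt_log_one_sub_exp_neg_mul {β s : ℝ} (h : β * s ≠ 0) :
    HasDerivAt (fun s => log (1 - exp (-β * s)))
      (β * (exp (-β * s) / (1 - exp (-β * s)))) s := by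
  have hne : 1 - exp (-β * s) ≠ 0 :=
    sub_ne_zero.mpr fun h1 => h (by simpa using (exp_eq_one_iff _).mp h1.symm)
  refine ((((hasDerivAt_id' s).const_mul (-β)).exp.const_sub 1).log hne).congr_deriv ?_
  field_simp

lemma exp_neg_mul_div_one_sub_pos {β s : ℝ} (h : 0 < β * s) :
    0 < exp (-β * s) / (1 - exp (-β * s)) :=
  div_pos (exp_pos _) (sub_pos.mpr (exp_lt_one_iff.mpr (by linarith)))

lemma rateFn_arguments_pos {x y δ : ℝ} (hδ : δ ∈ Ioo (max (x + y - 1) 0) (min x y)) :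
    0 < δ ∧ 0 < x - δ ∧ 0 < y - δ ∧ 0 < 1 - x - y + δ := by
  simp only [mem_Ioo, max_lt_iff, lt_min_iff] at hδ
  refine ⟨hδ.1.2, ?_, ?_, ?_⟩ <;> linarith

noncomputable def rateFnDeriv (β x y δ : ℝ) : ℝ :=
  β * (2 * δ - x - y) + log (1 - exp (-β * δ)) - log (1 - exp (-β * (x - δ)))
    - log (1 - exp (-β * (y - δ))) + log (1 - exp (-β * (1 - x - y + δ)))

noncomputable def rateFnDeriv2 (β x y δ : ℝ) : ℝ :=
  β * (2 + exp (-β * δ) / (1 - exp (-β * δ))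
    + exp (-β * (x - δ)) / (1 - exp (-β * (x - δ)))
    + exp (-β * (y - δ)) / (1 - exp (-β * (y - δ)))
    + exp (-β * (1 - x - y + δ)) / (1 - exp (-β * (1 - x - y + δ))))

section

variable {β x y δ : ℝ} (hβ : 0 < β) (hδ : δ ∈ Ioo (max (x + y - 1) 0) (min x y))
include hβ hδ

lemma hasDerivAt_rateFn : HasDerivAt (rateFn β x y) (rateFnDeriv β x y δ) δ := by
  obtain ⟨h₁, h₂, h₃, h₄⟩ := rateFn_arguments_pos hδ
  have hA := hasDerivAt_Li2_exp_neg_mul (mul_pos hβ h₁)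
  have hB := (hasDerivAt_Li2_exp_neg_mul (mul_pos hβ h₂)).comp δ ((hasDerivAt_id' δ).const_sub x)
  have hC := (hasDerivAt_Li2_exp_neg_mul (mul_pos hβ h₃)).comp δ ((hasDerivAt_id' δ).const_sub y)
  have hD := (hasDerivAt_Li2_exp_neg_mul (mul_pos hβ h₄)).comp δ
    ((hasDerivAt_id' δ).const_add (1 - x - y))
  have hP := (((hasDerivAt_id' δ).const_sub x).const_mul (β ^ 2)).mul
    ((hasDerivAt_id' δ).const_sub y)
  have hinner := ((((hP.sub_const (π ^ 2 / 6)).add hA).add hB).add hC).add hD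
  refine ((((((hinner.add_const _).sub_const _).sub_const _).sub_const _).sub_const _).const_mul
    (1 / β)).congr_deriv ?_
  unfold rateFnDeriv
  field_simp
  ring

lemma hasDerivAt_rateFnDeriv : HasDerivAt (rateFnDeriv β x y) (rateFnDeriv2 β x y δ) δ := by
  obtain ⟨h₁, h₂, h₃, h₄⟩ := rateFn_arguments_pos hδ
  have hA := hasDerivAt_log_one_sub_exp_neg_mul (mul_pos hβ h₁).ne'
  have hB := (hasDerivAt_log_one_sub_exp_neg_mul (mul_pos hβ h₂).ne').comp δ
    ((hasDerivAt_id' δ).const_sub x)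
  have hC := (hasDerivAt_log_one_sub_exp_neg_mul (mul_pos hβ h₃).ne').comp δ
    ((hasDerivAt_id' δ).const_sub y)
  have hD := (hasDerivAt_log_one_sub_exp_neg_mul (mul_pos hβ h₄).ne').comp δ
    ((hasDerivAt_id' δ).const_add (1 - x - y))
  have hP := (((hasDerivAt_id' δ).const_mul 2).sub_const x).sub_const y |>.const_mul β
  refine ((((hP.add hA).sub hB).sub hC).add hD).congr_deriv ?_
  unfold rateFnDeriv2
  ring

lemma deriv_deriv_rateFn : deriv (deriv (rateFn β x y)) δ = rateFnDeriv2 β x y δ := by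
  have hderiv : deriv (rateFn β x y) =ᶠ[𝓝 δ] rateFnDeriv β x y := by
    filter_upwards [isOpen_Ioo.mem_nhds hδ] with t ht using (hasDerivAt_rateFn hβ ht).deriv
  rw [hderiv.deriv_eq]
  exact (hasDerivAt_rateFnDeriv hβ hδ).deriv

lemma rateFnDeriv2_pos : 0 < rateFnDeriv2 β x y δ := by
  obtain ⟨h₁, h₂, h₃, h₄⟩ := rateFn_arguments_pos hδ
  have hq₁ := exp_neg_mul_div_one_sub_pos (mul_pos hβ h₁)
  have hq₂ := exp_neg_mul_div_one_sub_pos (mul_pos hβ h₂)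
  have hq₃ := exp_neg_mul_div_one_sub_pos (mul_pos hβ h₃)
  have hq₄ := exp_neg_mul_div_one_sub_pos (mul_pos hβ h₄)
  exact mul_pos hβ (by linarith)

end

theorem rateFn_second_deriv_and_convex_general (β x y : ℝ) (hβ : 0 < β) :
    (∀ δ ∈ Set.Ioo (max (x + y - 1) 0) (min x y),
      deriv (deriv (fun t => rateFn β x y t)) δ
        = β * (2 + Real.exp (-β * δ) / (1 - Real.exp (-β * δ))
          + Real.exp (-β * (x - δ)) / (1 - Real.exp (-β * (x - δ)))
          + Real.exp (-β * (y - δ)) / (1 - Real.exp (-β * (y - δ)))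
          + Real.exp (-β * (1 - x - y + δ)) / (1 - Real.exp (-β * (1 - x - y + δ))))) ∧
    (∀ δ ∈ Set.Ioo (max (x + y - 1) 0) (min x y),
      0 < β * (2 + Real.exp (-β * δ) / (1 - Real.exp (-β * δ))
          + Real.exp (-β * (x - δ)) / (1 - Real.exp (-β * (x - δ)))
          + Real.exp (-β * (y - δ)) / (1 - Real.exp (-β * (y - δ)))
          + Real.exp (-β * (1 - x - y + δ)) / (1 - Real.exp (-β * (1 - x - y + δ))))) ∧
    StrictConvexOn ℝ (Set.Ioo (max (x + y - 1) 0) (min x y))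
      (fun t => rateFn β x y t) := by
  refine ⟨fun δ hδ => deriv_deriv_rateFn hβ hδ, fun δ hδ => rateFnDeriv2_pos hβ hδ, ?_⟩
  refine strictConvexOn_of_deriv2_pos' (convex_Ioo _ _)
    (fun δ hδ => (hasDerivAt_rateFn hβ hδ).continuousAt.continuousWithinAt) fun δ hδ => ?_
  rw [Function.iterate_succ_apply, Function.iterate_one]
  exact deriv_deriv_rateFn hβ hδ ▸ rateFnDeriv2_pos hβ hδ

/-- The second derivative of the rate function equals
`β(2 + e^{-βδ}/(1-e^{-βδ}) + e^{-β(x-δ)}/(1-e^{-β(x-δ)}) + e^{-β(y-δ)}/(1-e^{-β(y-δ)})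
 + e^{-β(1-x-y+δ)}/(1-e^{-β(1-x-y+δ)}))`, which is strictly positive; hence
`a_β(x,y;·)` is strictly convex on `(max{x+y-1,0}, min{x,y})`. -/
theorem rateFn_second_deriv_and_convex (β x y : ℝ) (hβ : 0 < β)
    (hx : x ∈ Set.Ioo (0:ℝ) 1) (hy : y ∈ Set.Ioo (0:ℝ) 1) :
    (∀ δ ∈ Set.Ioo (max (x + y - 1) 0) (min x y),
      deriv (deriv (fun t => rateFn β x y t)) δ
        = β * (2 + Real.exp (-β * δ) / (1 - Real.exp (-β * δ))
          + Real.exp (-β * (x - δ)) / (1 - Real.exp (-β * (x - δ)))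
          + Real.exp (-β * (y - δ)) / (1 - Real.exp (-β * (y - δ)))
          + Real.exp (-β * (1 - x - y + δ)) / (1 - Real.exp (-β * (1 - x - y + δ))))) ∧
    (∀ δ ∈ Set.Ioo (max (x + y - 1) 0) (min x y),
      0 < β * (2 + Real.exp (-β * δ) / (1 - Real.exp (-β * δ))
          + Real.exp (-β * (x - δ)) / (1 - Real.exp (-β * (x - δ)))
          + Real.exp (-β * (y - δ)) / (1 - Real.exp (-β * (y - δ)))
          + Real.exp (-β * (1 - x - y + δ)) / (1 - Real.exp (-β * (1 - x - y + δ))))) ∧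
    StrictConvexOn ℝ (Set.Ioo (max (x + y - 1) 0) (min x y))
      (fun t => rateFn β x y t) :=
  rateFn_second_deriv_and_convex_general β x y hβ
end

section
/- Fix β > 0, x,y ∈ (0,1), and let δ = h_β(x,y). Then β(2δ-x-y) - ln(1-e^{-β(x-δ)}) - ln(1-e^{-β(y-δ)}) + ln(1-e^{-βδ}) + ln(1-e^{-β(1-x-y+δ)}) = 0, i.e., h_β(x,y) is a critical point of the rate function δ ↦ a_β(x,y;δ). -/
/-!
With `u = e^{-βx}`, `v = e^{-βy}`, `q = e^{-β}` and `t = e^{-βδ}`, the derivative of the rate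
function at `δ` is `log ((1 - t)(uv - qt) / ((t - u)(t - v)))`, which vanishes exactly when
`(1 - q) t² = (u + v - uv - q) t`. The definition of `h_β` says precisely that
`t = (u + v - uv - q) / (1 - q)` at `δ = h_β(x,y)`, and then both `(1 - t)(uv - qt)` and
`(t - u)(t - v)` equal `(1 - u)(1 - v)(u - q)(v - q) / (1 - q)²`.
-/

open Real

lemma log_rate_deriv_eq_zero {u v q t : ℝ} (hu : 0 < u) (hv : 0 < v) (htu : u < t) (htv : v < t)
    (ht : t < 1) (hqt : q * t < u * v)
    (hcrit : (1 - t) * (u * v - q * t) = (t - u) * (t - v)) :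
    log (u * v / t ^ 2) - log (1 - u / t) - log (1 - v / t) + log (1 - t)
      + log (1 - q * t / (u * v)) = 0 := by
  have ht0 : 0 < t := hu.trans htu
  have huv : 0 < u * v := mul_pos hu hv
  have hlog := congrArg log hcrit
  rw [log_mul (sub_pos.2 ht).ne' (sub_pos.2 hqt).ne',
    log_mul (sub_pos.2 htu).ne' (sub_pos.2 htv).ne'] at hlog
  rw [one_sub_div ht0.ne', one_sub_div ht0.ne', one_sub_div huv.ne',
    log_div huv.ne' (by positivity), log_div (sub_pos.2 htu).ne' ht0.ne',
    log_div (sub_pos.2 htv).ne' ht0.ne', log_div (sub_pos.2 hqt).ne' huv.ne', log_pow]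
  push_cast
  linarith

/-- The value of `e^{-β h_β(x,y)}` in terms of `u = e^{-βx}`, `v = e^{-βy}`, `q = e^{-β}`. -/
noncomputable def expNegHeight (u v q : ℝ) : ℝ := (u + v - u * v - q) / (1 - q)

section expNegHeight

variable {u v q : ℝ}

lemma one_sub_expNegHeight (hq : q ≠ 1) :
    1 - expNegHeight u v q = (1 - u) * (1 - v) / (1 - q) := by
  have : (1 : ℝ) - q ≠ 0 := sub_ne_zero.2 hq.symm
  rw [expNegHeight]; field_simp; ring

lemma expNegHeight_sub_left (hq : q ≠ 1) :
    expNegHeight u v q - u = (1 - u) * (v - q) / (1 - q) := by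
  have : (1 : ℝ) - q ≠ 0 := sub_ne_zero.2 hq.symm
  rw [expNegHeight]; field_simp; ring

lemma expNegHeight_sub_right (hq : q ≠ 1) :
    expNegHeight u v q - v = (1 - v) * (u - q) / (1 - q) := by
  have : (1 : ℝ) - q ≠ 0 := sub_ne_zero.2 hq.symm
  rw [expNegHeight]; field_simp; ring

lemma mul_sub_mul_expNegHeight (hq : q ≠ 1) :
    u * v - q * expNegHeight u v q = (u - q) * (v - q) / (1 - q) := by
  have : (1 : ℝ) - q ≠ 0 := sub_ne_zero.2 hq.symm
  rw [expNegHeight]; field_simp; ring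

lemma one_sub_expNegHeight_mul_eq (hq : q ≠ 1) :
    (1 - expNegHeight u v q) * (u * v - q * expNegHeight u v q) =
      (expNegHeight u v q - u) * (expNegHeight u v q - v) := by
  rw [one_sub_expNegHeight hq, mul_sub_mul_expNegHeight hq, expNegHeight_sub_left hq,
    expNegHeight_sub_right hq]
  ring

lemma log_rate_deriv_expNegHeight (hq : 0 < q) (hqu : q < u) (hqv : q < v) (hu : u < 1)
    (hv : v < 1) :
    log (u * v / expNegHeight u v q ^ 2) - log (1 - u / expNegHeight u v q)
      - log (1 - v / expNegHeight u v q) + log (1 - expNegHeight u v q)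
      + log (1 - q * expNegHeight u v q / (u * v)) = 0 := by
  have hq1 : q ≠ 1 := by linarith
  have hA : 0 < 1 - q := by linarith
  refine log_rate_deriv_eq_zero (hq.trans hqu) (hq.trans hqv) ?_ ?_ ?_ ?_
    (one_sub_expNegHeight_mul_eq hq1)
  · rw [← sub_pos, expNegHeight_sub_left hq1]
    exact div_pos (mul_pos (sub_pos.2 hu) (sub_pos.2 hqv)) hA
  · rw [← sub_pos, expNegHeight_sub_right hq1]
    exact div_pos (mul_pos (sub_pos.2 hv) (sub_pos.2 hqu)) hA
  · rw [← sub_pos, one_sub_expNegHeight hq1]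
    exact div_pos (mul_pos (sub_pos.2 hu) (sub_pos.2 hv)) hA
  · rw [← sub_pos, mul_sub_mul_expNegHeight hq1]
    exact div_pos (mul_pos (sub_pos.2 hqu) (sub_pos.2 hqv)) hA

end expNegHeight

lemma exp_neg_mul_hFn {β x y : ℝ} (hβ : β ≠ 0) (hq : exp (-β) < 1)
    (hE : 0 < exp (-β * x) + exp (-β * y) - exp (-β * x) * exp (-β * y) - exp (-β)) :
    exp (-β * hFn β x y) = expNegHeight (exp (-β * x)) (exp (-β * y)) (exp (-β)) := by
  have hA : 0 < 1 - exp (-β) := sub_pos.2 hq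
  have hsplit : exp (-β * (x + y)) = exp (-β * x) * exp (-β * y) := by
    rw [← exp_add]; ring_nf
  have hexponent : -β * hFn β x y = log (exp (-β * x) + exp (-β * y) - exp (-β * x) * exp (-β * y)
      - exp (-β)) - log (1 - exp (-β)) := by
    rw [hFn, hsplit]; field_simp; ring
  rw [hexponent, exp_sub, exp_log hE, exp_log hA, expNegHeight]

/-- `h_β(x,y)` is a critical point of the rate function: the first derivative of
`a_β(x,y;·)` vanishes at `δ = h_β(x,y)`. -/
theorem hFn_critical_point (β x y : ℝ) (hβ : 0 < β)
    (hx : x ∈ Set.Ioo (0:ℝ) 1) (hy : y ∈ Set.Ioo (0:ℝ) 1) :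
    β * (2 * hFn β x y - x - y)
      - Real.log (1 - Real.exp (-β * (x - hFn β x y)))
      - Real.log (1 - Real.exp (-β * (y - hFn β x y)))
      + Real.log (1 - Real.exp (-β * hFn β x y))
      + Real.log (1 - Real.exp (-β * (1 - x - y + hFn β x y))) = 0 := by
  set u := exp (-β * x)
  set v := exp (-β * y)
  set q := exp (-β)
  set t := exp (-β * hFn β x y)
  have hq : 0 < q := exp_pos _
  have hqu : q < u := exp_lt_exp.2 (by nlinarith [hx.2])
  have hqv : q < v := exp_lt_exp.2 (by nlinarith [hy.2])
  have hu : u < 1 := exp_lt_one_iff.2 (by nlinarith [hx.1])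
  have hv : v < 1 := exp_lt_one_iff.2 (by nlinarith [hy.1])
  have ht : t = expNegHeight u v q :=
    exp_neg_mul_hFn hβ.ne' (hqu.trans hu) (by nlinarith [mul_pos (sub_pos.2 hu) (exp_pos (-β * y))])
  have hlin : β * (2 * hFn β x y - x - y) = log (u * v / t ^ 2) := by
    rw [log_div (by positivity) (by positivity), log_mul (exp_pos _).ne' (exp_pos _).ne', log_pow,
      log_exp, log_exp, log_exp]
    push_cast; ring
  have hx' : exp (-β * (x - hFn β x y)) = u / t := by rw [← exp_sub]; ring_nf
  have hy' : exp (-β * (y - hFn β x y)) = v / t := by rw [← exp_sub]; ring_nf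
  have hxy' : exp (-β * (1 - x - y + hFn β x y)) = q * t / (u * v) := by
    rw [← exp_add, ← exp_add, ← exp_sub]; ring_nf
  rw [hlin, hx', hy', hxy', ht]
  exact log_rate_deriv_expNegHeight hq hqu hqv hu hv
end

section
/- Fix β > 0, x,y ∈ (0,1), and let δ = h_β(x,y). Then 2 + e^{-βδ}/(1-e^{-βδ}) + e^{-β(x-δ)}/(1-e^{-β(x-δ)}) + e^{-β(y-δ)}/(1-e^{-β(y-δ)}) + e^{-β(1-x-y+δ)}/(1-e^{-β(1-x-y+δ)}) = (1-e^{-β}) / ((1-e^{-β(x-δ)})(1-e^{-β(y-δ)})). -/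
/-- At `δ = h_β(x,y)`:
`2 + e^{-βδ}/(1-e^{-βδ}) + e^{-β(x-δ)}/(1-e^{-β(x-δ)}) + e^{-β(y-δ)}/(1-e^{-β(y-δ)})
  + e^{-β(1-x-y+δ)}/(1-e^{-β(1-x-y+δ)}) = (1-e^{-β})/((1-e^{-β(x-δ)})(1-e^{-β(y-δ)}))`. -/
theorem hFn_second_deriv_identity (β x y : ℝ) (hβ : 0 < β)
    (hx : x ∈ Set.Ioo (0:ℝ) 1) (hy : y ∈ Set.Ioo (0:ℝ) 1) :
    2 + Real.exp (-β * hFn β x y) / (1 - Real.exp (-β * hFn β x y))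
      + Real.exp (-β * (x - hFn β x y)) / (1 - Real.exp (-β * (x - hFn β x y)))
      + Real.exp (-β * (y - hFn β x y)) / (1 - Real.exp (-β * (y - hFn β x y)))
      + Real.exp (-β * (1 - x - y + hFn β x y)) /
          (1 - Real.exp (-β * (1 - x - y + hFn β x y)))
      = (1 - Real.exp (-β)) /
        ((1 - Real.exp (-β * (x - hFn β x y))) * (1 - Real.exp (-β * (y - hFn β x y)))) := by
  obtain ⟨hx0, hx1⟩ := hx
  obtain ⟨hy0, hy1⟩ := hy
  have hβ' : β ≠ 0 := ne_of_gt hβ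
  set q := Real.exp (-β) with hqd
  set a := Real.exp (-β * x) with had
  set b := Real.exp (-β * y) with hbd
  have hq0 : 0 < q := Real.exp_pos _
  have ha0 : 0 < a := Real.exp_pos _
  have hb0 : 0 < b := Real.exp_pos _
  have hq1 : q < 1 := by
    rw [hqd, ← Real.exp_zero]
    exact Real.exp_lt_exp.mpr (by linarith)
  have ha1 : a < 1 := by
    rw [had, ← Real.exp_zero]
    exact Real.exp_lt_exp.mpr (by nlinarith)
  have hb1 : b < 1 := by
    rw [hbd, ← Real.exp_zero]
    exact Real.exp_lt_exp.mpr (by nlinarith)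
  have haq : q < a := by
    rw [hqd, had]
    exact Real.exp_lt_exp.mpr (by nlinarith)
  have hbq : q < b := by
    rw [hqd, hbd]
    exact Real.exp_lt_exp.mpr (by nlinarith)
  set N := a + b - a * b - q with hNd
  have hN0 : 0 < N := by nlinarith [mul_pos hb0 (sub_pos.mpr ha1)]
  have h1q : 0 < 1 - q := by linarith
  have hNne : N ≠ 0 := ne_of_gt hN0
  have h1qne : (1 : ℝ) - q ≠ 0 := ne_of_gt h1q
  have hab : Real.exp (-β * (x + y)) = a * b := by
    rw [had, hbd, ← Real.exp_add]; ring_nf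
  have key : β * hFn β x y = Real.log (1 - q) - Real.log N := by
    rw [hFn, hab, ← hqd, ← had, ← hbd, ← hNd]
    field_simp
  have einv : Real.exp (β * hFn β x y) = (1 - q) / N := by
    rw [key, Real.exp_sub, Real.exp_log h1q, Real.exp_log hN0]
  have e0 : Real.exp (-β * hFn β x y) = N / (1 - q) := by
    rw [show -β * hFn β x y = Real.log N - Real.log (1 - q) by
      have : -β * hFn β x y = -(β * hFn β x y) := by ring
      rw [this, key]; ring]
    rw [Real.exp_sub, Real.exp_log hN0, Real.exp_log h1q]
  have e1 : Real.exp (-β * (x - hFn β x y)) = a * ((1 - q) / N) := by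
    rw [show -β * (x - hFn β x y) = -β * x + β * hFn β x y by ring,
      Real.exp_add, ← had, einv]
  have e2 : Real.exp (-β * (y - hFn β x y)) = b * ((1 - q) / N) := by
    rw [show -β * (y - hFn β x y) = -β * y + β * hFn β x y by ring,
      Real.exp_add, ← hbd, einv]
  have e3 : Real.exp (-β * (1 - x - y + hFn β x y))
      = q * a⁻¹ * b⁻¹ * (N / (1 - q)) := by
    rw [show -β * (1 - x - y + hFn β x y)
        = -β + -(-β * x) + -(-β * y) + -β * hFn β x y by ring,
      Real.exp_add, Real.exp_add, Real.exp_add, ← hqd, Real.exp_neg, Real.exp_neg,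
      ← had, ← hbd, e0]
  rw [e0, e1, e2, e3]
  have d0 : 1 - N / (1 - q) = (1 - a) * (1 - b) / (1 - q) := by
    field_simp
    linear_combination -hNd
  have d1 : 1 - a * ((1 - q) / N) = (b - q) * (1 - a) / N := by
    field_simp
    linear_combination (1 : ℝ) * hNd
  have d2 : 1 - b * ((1 - q) / N) = (a - q) * (1 - b) / N := by
    field_simp
    linear_combination (1 : ℝ) * hNd
  have d3 : 1 - q * a⁻¹ * b⁻¹ * (N / (1 - q)) = (a - q) * (b - q) / (a * b * (1 - q)) := by
    rw [hNd]
    field_simp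
    ring
  rw [d0, d1, d2, d3]
  have hane : (1 : ℝ) - a ≠ 0 := by linarith
  have hbne : (1 : ℝ) - b ≠ 0 := by linarith
  have haqne : a - q ≠ 0 := by linarith
  have hbqne : b - q ≠ 0 := by linarith
  have hanz : a ≠ 0 := ne_of_gt ha0
  have hbnz : b ≠ 0 := ne_of_gt hb0
  field_simp
  rw [hNd]
  ring
end

section
/- Fix β > 0, x,y ∈ (0,1), and let δ = h_β(x,y). Then (β²/2)(x+y)δ - β²xy - (1/2)ln(1-e^{-βδ}) - (xβ/2)ln(1-e^{-β(x-δ)}) - (yβ/2)ln(1-e^{-β(y-δ)}) - ((1+(1-x-y)β)/2)ln(1-e^{-β(1-x-y+δ)}) + ((1+xβ)/2)ln(1-e^{-βx}) + ((1+yβ)/2)ln(1-e^{-βy}) + ((1+(1-x)β)/2)ln(1-e^{-β(1-x)}) + ((1+(1-y)β)/2)ln(1-e^{-β(1-y)}) - (1+β/2)ln(1-e^{-β}) = 0. -/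
/-!
Write `a = e^{-βx}`, `b = e^{-βy}`, `q = e^{-β}` and `d = e^{-βδ}`. The definition of `δ` says
exactly that `(1 - q) d = a + b - ab - q`, and under this relation each of the nine quantities
`1 - e^{-β(⋯)}` in the identity factors into `1 - a`, `1 - b`, `a - q`, `b - q`, `1 - q` and
powers of `a`, `b`, `d`. After taking logarithms the left-hand side is a linear combination of
`log (1 - a)`, `log (1 - b)`, `log (a - q)`, `log (b - q)`, `log (1 - q)`, `βx`, `βy` and `βδ`,
whose coefficients all vanish.
-/

open Real

section Factorization

variable {a b q d : ℝ}

theorem log_one_sub_of_mul_eq (hd : (1 - q) * d = a + b - a * b - q)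
    (ha : 1 - a ≠ 0) (hb : 1 - b ≠ 0) (hq : 1 - q ≠ 0) :
    log (1 - d) = log (1 - a) + log (1 - b) - log (1 - q) := by
  have hfac : 1 - d = (1 - a) * (1 - b) / (1 - q) := by
    rw [eq_div_iff hq]; linear_combination -hd
  rw [hfac, log_div (mul_ne_zero ha hb) hq, log_mul ha hb]

theorem log_one_sub_div_of_mul_eq (hd : (1 - q) * d = a + b - a * b - q)
    (ha : 1 - a ≠ 0) (hbq : b - q ≠ 0) (hq : 1 - q ≠ 0) (hd0 : d ≠ 0) :
    log (1 - a / d) = log (1 - a) + log (b - q) - log (1 - q) - log d := by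
  have hfac : 1 - a / d = (1 - a) * (b - q) / ((1 - q) * d) := by
    field_simp; linear_combination hd
  rw [hfac, log_div (mul_ne_zero ha hbq) (mul_ne_zero hq hd0), log_mul ha hbq, log_mul hq hd0]
  ring

theorem log_one_sub_mul_div_of_mul_eq (hd : (1 - q) * d = a + b - a * b - q)
    (haq : a - q ≠ 0) (hbq : b - q ≠ 0) (hq : 1 - q ≠ 0) (ha0 : a ≠ 0) (hb0 : b ≠ 0) :
    log (1 - q * d / (a * b)) = log (a - q) + log (b - q) - log (1 - q) - log a - log b := by
  have hfac : 1 - q * d / (a * b) = (a - q) * (b - q) / ((1 - q) * (a * b)) := by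
    field_simp; linear_combination -q * hd
  rw [hfac, log_div (mul_ne_zero haq hbq) (mul_ne_zero hq (mul_ne_zero ha0 hb0)),
    log_mul haq hbq, log_mul hq (mul_ne_zero ha0 hb0), log_mul ha0 hb0]
  ring

theorem log_one_sub_div_of_ne (haq : a - q ≠ 0) (ha0 : a ≠ 0) :
    log (1 - q / a) = log (a - q) - log a := by
  rw [one_sub_div ha0, log_div haq ha0]

end Factorization

theorem exp_neg_mul_mem_Ioo {β x : ℝ} (hβ : 0 < β) (hx : x ∈ Set.Ioo (0 : ℝ) 1) :
    exp (-β * x) ∈ Set.Ioo (exp (-β)) 1 :=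
  ⟨exp_lt_exp.2 (by nlinarith [hx.2]), exp_lt_one_iff.2 (by nlinarith [hx.1])⟩

theorem one_sub_exp_neg_mul_exp_neg_mul_hFn {β x y : ℝ} (hβ : β ≠ 0)
    (hq : 0 < 1 - exp (-β))
    (hA : 0 < exp (-β * x) + exp (-β * y) - exp (-β * x) * exp (-β * y) - exp (-β)) :
    (1 - exp (-β)) * exp (-β * hFn β x y)
      = exp (-β * x) + exp (-β * y) - exp (-β * x) * exp (-β * y) - exp (-β) := by
  have hab : exp (-β * (x + y)) = exp (-β * x) * exp (-β * y) := by
    rw [← exp_add]; ring_nf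
  have hexp : -β * hFn β x y
      = log (exp (-β * x) + exp (-β * y) - exp (-β * x) * exp (-β * y) - exp (-β))
        - log (1 - exp (-β)) := by
    rw [hFn, hab]; field_simp; ring
  rw [hexp, exp_sub, exp_log hA, exp_log hq]
  field_simp

/-- The logarithmic identity satisfied at `δ = h_β(x,y)` (Lemma on the constant term
of the local CLT expansion). -/
theorem hFn_log_constant_identity (β x y : ℝ) (hβ : 0 < β)
    (hx : x ∈ Set.Ioo (0:ℝ) 1) (hy : y ∈ Set.Ioo (0:ℝ) 1) :
    β ^ 2 / 2 * (x + y) * hFn β x y - β ^ 2 * x * y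
      - (1 / 2) * Real.log (1 - Real.exp (-β * hFn β x y))
      - (x * β / 2) * Real.log (1 - Real.exp (-β * (x - hFn β x y)))
      - (y * β / 2) * Real.log (1 - Real.exp (-β * (y - hFn β x y)))
      - ((1 + (1 - x - y) * β) / 2) *
          Real.log (1 - Real.exp (-β * (1 - x - y + hFn β x y)))
      + ((1 + x * β) / 2) * Real.log (1 - Real.exp (-β * x))
      + ((1 + y * β) / 2) * Real.log (1 - Real.exp (-β * y))
      + ((1 + (1 - x) * β) / 2) * Real.log (1 - Real.exp (-β * (1 - x)))
      + ((1 + (1 - y) * β) / 2) * Real.log (1 - Real.exp (-β * (1 - y)))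
      - (1 + β / 2) * Real.log (1 - Real.exp (-β)) = 0 := by
  set δ := hFn β x y
  obtain ⟨hqa, ha1⟩ := exp_neg_mul_mem_Ioo hβ hx
  obtain ⟨hqb, hb1⟩ := exp_neg_mul_mem_Ioo hβ hy
  have hq1 : exp (-β) < 1 := exp_lt_one_iff.2 (neg_lt_zero.2 hβ)
  have hd := one_sub_exp_neg_mul_exp_neg_mul_hFn (x := x) (y := y) hβ.ne' (by linarith)
    (by nlinarith [mul_pos (exp_pos (-β * x)) (sub_pos.2 hb1)])
  have hd_comm : (1 - exp (-β)) * exp (-β * δ)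
      = exp (-β * y) + exp (-β * x) - exp (-β * y) * exp (-β * x) - exp (-β) := by
    linear_combination hd
  have hexp_sub_δ : ∀ u, exp (-β * (u - δ)) = exp (-β * u) / exp (-β * δ) := fun u => by
    rw [← exp_sub]; ring_nf
  have hexp_one_sub : ∀ u, exp (-β * (1 - u)) = exp (-β) / exp (-β * u) := fun u => by
    rw [← exp_sub]; ring_nf
  have exy : exp (-β * (1 - x - y + δ))
      = exp (-β) * exp (-β * δ) / (exp (-β * x) * exp (-β * y)) := by
    rw [← exp_add, ← exp_add, ← exp_sub]; ring_nf
  rw [hexp_sub_δ, hexp_sub_δ, exy, hexp_one_sub, hexp_one_sub,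
    log_one_sub_of_mul_eq hd (by linarith) (by linarith) (by linarith),
    log_one_sub_div_of_mul_eq hd (by linarith) (by linarith) (by linarith) (exp_pos _).ne',
    log_one_sub_div_of_mul_eq hd_comm (by linarith) (by linarith) (by linarith) (exp_pos _).ne',
    log_one_sub_mul_div_of_mul_eq hd (by linarith) (by linarith) (by linarith)
      (exp_pos _).ne' (exp_pos _).ne',
    log_one_sub_div_of_ne (by linarith) (exp_pos _).ne',
    log_one_sub_div_of_ne (by linarith) (exp_pos _).ne']
  simp only [log_exp]
  ring
end

section
/- Fix β > 0 and x,y ∈ (0,1). Then ∂²h_β(x,y)/∂x∂y = (β/2)·sinh(β/2) / (e^{β/4}·cosh(β(x-y)/2) - e^{-β/4}·cosh(β(x+y-1)/2))². -/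
open Real Filter Topology

noncomputable def hFnArg (β x y : ℝ) : ℝ :=
  exp (-β * x) + exp (-β * y) - exp (-β * (x + y)) - exp (-β)

lemma hFnArg_eq (β x y : ℝ) :
    hFnArg β x y = 1 - exp (-β) - (1 - exp (-β * x)) * (1 - exp (-β * y)) := by
  rw [hFnArg, mul_add, exp_add]
  ring

lemma hFnArg_comm (β x y : ℝ) : hFnArg β x y = hFnArg β y x := by
  rw [hFnArg_eq, hFnArg_eq, mul_comm]

lemma hFnArg_pos {β x y : ℝ} (hβ : 0 < β) (hx : 0 < x) (hy : y < 1) : 0 < hFnArg β x y := by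
  have hu : exp (-β * x) < 1 := exp_lt_one_iff.2 (by nlinarith)
  have hvq : exp (-β) < exp (-β * y) := exp_lt_exp.2 (by nlinarith)
  have hq : exp (-β) < 1 := exp_lt_one_iff.2 (by linarith)
  rw [hFnArg_eq]
  nlinarith [exp_pos (-β * x), mul_pos (exp_pos (-β * x)) (sub_pos.2 hvq)]

lemma hasDerivAt_one_sub_exp_neg_mul (β t : ℝ) :
    HasDerivAt (fun t => 1 - exp (-β * t)) (β * exp (-β * t)) t :=
  (((hasDerivAt_id' (x := t)).const_mul (-β)).exp.const_sub 1).congr_deriv (by ring)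

lemma hasDerivAt_hFnArg_snd (β x y : ℝ) :
    HasDerivAt (fun y => hFnArg β x y) (-((1 - exp (-β * x)) * (β * exp (-β * y)))) y := by
  simp only [hFnArg_eq]
  exact ((hasDerivAt_one_sub_exp_neg_mul β y).const_mul _).const_sub _

lemma hasDerivAt_hFnArg_fst (β x y : ℝ) :
    HasDerivAt (fun x => hFnArg β x y) (-((1 - exp (-β * y)) * (β * exp (-β * x)))) x := by
  simpa only [hFnArg_comm β _ y] using hasDerivAt_hFnArg_snd β y x

lemma hasDerivAt_hFn_snd {β x y : ℝ} (hβ : β ≠ 0) (hD : hFnArg β x y ≠ 0) :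
    HasDerivAt (fun y => hFn β x y) ((1 - exp (-β * x)) * exp (-β * y) / hFnArg β x y) y :=
  (((hasDerivAt_hFnArg_snd β x y).log hD).const_sub _ |>.const_mul (1 / β)).congr_deriv
    (by field_simp)

noncomputable def mallowsDensity (β x y : ℝ) : ℝ :=
  β * (1 - exp (-β)) * exp (-β * x) * exp (-β * y) / hFnArg β x y ^ 2

lemma hasDerivAt_deriv_hFn_snd {β x y : ℝ} (hD : hFnArg β x y ≠ 0) :
    HasDerivAt (fun x => (1 - exp (-β * x)) * exp (-β * y) / hFnArg β x y)
      (mallowsDensity β x y) x := by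
  refine ((hasDerivAt_one_sub_exp_neg_mul β x).mul_const (exp (-β * y))).div
    (hasDerivAt_hFnArg_fst β x y) hD |>.congr_deriv ?_
  rw [mallowsDensity, hFnArg_eq]
  ring

lemma exp_mul_cosh (s t : ℝ) : exp s * cosh t = (exp (s + t) + exp (s - t)) / 2 := by
  rw [cosh_eq, exp_add, exp_sub, exp_neg]
  ring

lemma exp_mul_cosh_sub_exp_mul_cosh (β x y : ℝ) :
    exp (β / 4) * cosh (β * (x - y) / 2) - exp (-β / 4) * cosh (β * (x + y - 1) / 2)
      = exp (β / 4 + β * (x + y) / 2) * hFnArg β x y / 2 := by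
  rw [exp_mul_cosh, exp_mul_cosh, hFnArg]
  simp only [mul_add, mul_sub, ← exp_add]
  ring_nf

lemma two_mul_sinh_half (β : ℝ) : 2 * sinh (β / 2) = exp (β / 2) * (1 - exp (-β)) := by
  rw [sinh_eq, mul_sub, ← exp_add]
  ring_nf

lemma mallowsDensity_eq {β x y : ℝ} (hD : hFnArg β x y ≠ 0) :
    mallowsDensity β x y = (β / 2 * sinh (β / 2)) /
      (exp (β / 4) * cosh (β * (x - y) / 2) - exp (-β / 4) * cosh (β * (x + y - 1) / 2)) ^ 2 := by
  have hexp : exp (β / 4 + β * (x + y) / 2) ^ 2 * (exp (-β * x) * exp (-β * y))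
      = exp (β / 2) := by
    simp only [sq, ← exp_add]
    ring_nf
  rw [mallowsDensity, exp_mul_cosh_sub_exp_mul_cosh,
    div_eq_div_iff (pow_ne_zero 2 hD) (by positivity)]
  linear_combination (β * (1 - exp (-β)) * hFnArg β x y ^ 2 / 4) * hexp
    - (β * hFnArg β x y ^ 2 / 4) * two_mul_sinh_half β

/-- The mixed partial derivative of `h_β` recovers the Mallows permuton density:
`∂²h_β/∂x∂y = (β/2)sinh(β/2) / (e^{β/4}cosh(β(x-y)/2) - e^{-β/4}cosh(β(x+y-1)/2))²`. -/
theorem hFn_mixed_partial (β x y : ℝ) (hβ : 0 < β)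
    (hx : x ∈ Set.Ioo (0:ℝ) 1) (hy : y ∈ Set.Ioo (0:ℝ) 1) :
    deriv (fun x' => deriv (fun y' => hFn β x' y') y) x
      = (β / 2 * Real.sinh (β / 2)) /
        (Real.exp (β / 4) * Real.cosh (β * (x - y) / 2)
          - Real.exp (-β / 4) * Real.cosh (β * (x + y - 1) / 2)) ^ 2 := by
  have hD : hFnArg β x y ≠ 0 := (hFnArg_pos hβ hx.1 hy.2).ne'
  have hpartial : (fun x' => deriv (fun y' => hFn β x' y') y)
      =ᶠ[𝓝 x] fun x' => (1 - exp (-β * x')) * exp (-β * y) / hFnArg β x' y := by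
    filter_upwards [eventually_gt_nhds hx.1] with x' hx'
    exact (hasDerivAt_hFn_snd hβ.ne' (hFnArg_pos hβ hx' hy.2).ne').deriv
  rw [hpartial.deriv_eq, (hasDerivAt_deriv_hFn_snd hD).deriv, mallowsDensity_eq hD]
end

section
/- Fix β > 0, x ∈ (0,1), and 0 < y_{i-1} < y_i < 1. Then the composition identity h_{β(1-y_{i-1})}((x - h_β(x,y_{i-1}))/(1-y_{i-1}), (y_i - y_{i-1})/(1-y_{i-1})) = (h_β(x,y_i) - h_β(x,y_{i-1}))/(1-y_{i-1}) holds. -/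
/-!
In the exponential coordinates `q = e^{-β}`, `u = e^{-βx}`, `v = e^{-βy}` one has
`β h_β(x,y) = log (1 - q) - log (u + v - uv - q)`. Replacing `β` by `β(1-y₁)` and the arguments by
the rescaled ones turns these coordinates into `q / v₁`, `u (1-q) / D₁` and `v₂ / v₁`
(where `Dᵢ = u + vᵢ - u vᵢ - q`). For these, the log argument `u + v - uv - q` becomes
`(1 - q / v₁) D₂ / D₁`, so both sides equal `log (D₁ / D₂) / (β (1 - y₁))`.
-/

open Real

def mallowsArg (q u v : ℝ) : ℝ := u + v - u * v - q

lemma hFn_eq (β x y : ℝ) :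
    hFn β x y = 1 / β * (log (1 - exp (-β)) -
      log (mallowsArg (exp (-β)) (exp (-β * x)) (exp (-β * y)))) := by
  rw [hFn, mallowsArg, ← exp_add]
  ring_nf

-- `mallowsArg q u v = (1 - q) - (1 - u) * (1 - v)`.
lemma mallowsArg_pos {q u v : ℝ} (hqu : q < u) (hu : u ≤ 1) (hv : 0 < v) :
    0 < mallowsArg q u v := by
  unfold mallowsArg
  nlinarith

lemma exp_mul_hFn {β : ℝ} (x y : ℝ) (hβ : β ≠ 0) (hq : 0 < 1 - exp (-β))
    (hD : 0 < mallowsArg (exp (-β)) (exp (-β * x)) (exp (-β * y))) :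
    exp (β * hFn β x y) =
      (1 - exp (-β)) / mallowsArg (exp (-β)) (exp (-β * x)) (exp (-β * y)) := by
  rw [hFn_eq, ← mul_assoc, mul_one_div_cancel hβ, one_mul, exp_sub, exp_log hq, exp_log hD]

lemma mallowsArg_composition {q u v₁ : ℝ} (v₂ : ℝ) (hD : mallowsArg q u v₁ ≠ 0) (hv : v₁ ≠ 0) :
    mallowsArg (q / v₁) (u * (1 - q) / mallowsArg q u v₁) (v₂ / v₁)
      = (1 - q / v₁) * (mallowsArg q u v₂ / mallowsArg q u v₁) := by
  unfold mallowsArg at *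
  field_simp
  ring

theorem hFn_composition_general (β x y₁ y₂ : ℝ) (hβ : 0 < β)
    (hx : x ∈ Set.Ioo (0:ℝ) 1) (hy12 : y₁ < y₂) (hy2 : y₂ < 1) :
    hFn (β * (1 - y₁)) ((x - hFn β x y₁) / (1 - y₁)) ((y₂ - y₁) / (1 - y₁))
      = (hFn β x y₂ - hFn β x y₁) / (1 - y₁) := by
  obtain ⟨hx0, hx1⟩ := hx
  have h1y : 0 < 1 - y₁ := by linarith
  have hqu : exp (-β) < exp (-β * x) := exp_lt_exp.mpr (by nlinarith)
  have hu1 : exp (-β * x) ≤ 1 := exp_le_one_iff.mpr (by nlinarith)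
  have hqv : exp (-β) < exp (-β * y₁) := exp_lt_exp.mpr (by nlinarith)
  have hD₁ := mallowsArg_pos hqu hu1 (exp_pos (-β * y₁))
  have hD₂ := mallowsArg_pos hqu hu1 (exp_pos (-β * y₂))
  have hQ : 0 < 1 - exp (-β) / exp (-β * y₁) := by
    rw [sub_pos, div_lt_one (exp_pos _)]; exact hqv
  have hexp_a : exp (-(β * (1 - y₁)) * ((x - hFn β x y₁) / (1 - y₁)))
      = exp (-β * x) * (1 - exp (-β)) / mallowsArg (exp (-β)) (exp (-β * x)) (exp (-β * y₁)) := by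
    rw [show -(β * (1 - y₁)) * ((x - hFn β x y₁) / (1 - y₁)) = -β * x + β * hFn β x y₁ by
      field_simp; ring, exp_add, exp_mul_hFn x y₁ hβ.ne' (by linarith) hD₁, mul_div_assoc]
  have hexp_b :
      exp (-(β * (1 - y₁)) * ((y₂ - y₁) / (1 - y₁))) = exp (-β * y₂) / exp (-β * y₁) := by
    rw [← exp_sub]; congr 1; field_simp; ring
  have hexp_1 : exp (-(β * (1 - y₁))) = exp (-β) / exp (-β * y₁) := by
    rw [← exp_sub]; ring_nf
  rw [hFn_eq (β * (1 - y₁)), hexp_1, hexp_a, hexp_b,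
    mallowsArg_composition _ hD₁.ne' (exp_pos _).ne',
    log_mul hQ.ne' (div_pos hD₂ hD₁).ne', log_div hD₂.ne' hD₁.ne', hFn_eq β x y₁, hFn_eq β x y₂]
  field_simp
  ring

/-- The composition identity for the limiting height profile:
`h_{β(1-y₁)}((x - h_β(x,y₁))/(1-y₁), (y₂-y₁)/(1-y₁)) = (h_β(x,y₂) - h_β(x,y₁))/(1-y₁)`
for `0 < y₁ < y₂ < 1`. -/
theorem hFn_composition (β x y₁ y₂ : ℝ) (hβ : 0 < β)
    (hx : x ∈ Set.Ioo (0:ℝ) 1) (hy1 : 0 < y₁) (hy12 : y₁ < y₂) (hy2 : y₂ < 1) :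
    hFn (β * (1 - y₁)) ((x - hFn β x y₁) / (1 - y₁)) ((y₂ - y₁) / (1 - y₁))
      = (hFn β x y₂ - hFn β x y₁) / (1 - y₁) :=
  hFn_composition_general β x y₁ y₂ hβ hx hy12 hy2
end
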